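/- Among all C¹ diffeomorphisms between rectangles [0,a]×[0,b] and [0,a']×[0,b'] taking corresponding sides to corresponding sides, with a'/b' ≥ a/b, the affine map (x,y) ↦ ((a'/a)x, (b'/b)y) has the minimal possible supremum of the dilatation quotient, namely K = (a'/b')/(a/b). -/

import Mathlib

/-!
The affine map has constant derivative `diag (a'/a) (b'/b)`, whose norm is the larger and whose
inverse has as norm the reciprocal of the smaller diagonal entry.

The lower bound is the length–area argument. A horizontal segment of the source rectangle is
mapped to a curve joining the two vertical sides of the target, so `a' ≤ ∫ ‖Df‖` along it;
integrating over the height gives `a' b ≤ ∫ ‖Df‖`, and Cauchy–Schwarz gives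
`(a' b)² ≤ a b ∫ ‖Df‖²`. In the plane `‖D‖ ≤ |det D| ‖D⁻¹‖`, so a dilatation quotient `≤ K`
yields `‖Df‖² ≤ K |det Df|`, while `∫ |det Df|` is the area `a' b'` of the image.
Hence `(a' b)² ≤ K a b a' b'`.
-/

open MeasureTheory Set Complex ComplexConjugate

theorem sq_setIntegral_le_measureReal_mul_setIntegral_sq {α : Type*} [MeasurableSpace α]
    {μ : Measure α} {s : Set α} (hs : μ s ≠ ⊤) {g : α → ℝ} (hg : IntegrableOn g s μ)
    (hg2 : IntegrableOn (fun x => g x ^ 2) s μ) :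
    (∫ x in s, g x ∂μ) ^ 2 ≤ μ.real s * ∫ x in s, g x ^ 2 ∂μ := by
  rcases eq_or_ne (μ s) 0 with h0 | h0
  · simp [Measure.restrict_eq_zero.2 h0]
  have hjensen := (even_two.convexOn_pow).map_set_average_le (continuous_pow 2).continuousOn
    isClosed_univ h0 hs (by simp) hg hg2
  have hpos : 0 < μ.real s := ENNReal.toReal_pos h0 hs
  simp only [setAverage_eq, smul_eq_mul, mul_pow] at hjensen
  field_simp at hjensen
  exact hjensen

theorem setIntegral_abs_det_fderiv_eq_measureReal_image {E : Type*} [NormedAddCommGroup E]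
    [NormedSpace ℝ E] [MeasurableSpace E] [BorelSpace E] [FiniteDimensional ℝ E]
    (μ : Measure E) [μ.IsAddHaarMeasure] {s : Set E} {f : E → E} {f' : E → E →L[ℝ] E}
    (hs : MeasurableSet s) (hf' : ∀ x ∈ s, HasFDerivWithinAt f (f' x) s x) (hf : InjOn f s) :
    ∫ x in s, |(f' x).det| ∂μ = μ.real (f '' s) := by
  simpa using (integral_image_eq_integral_abs_det_fderiv_smul μ hs hf' hf fun _ => (1 : ℝ)).symm

theorem norm_sub_le_integral_norm_of_hasDerivWithinAt {E : Type*} [NormedAddCommGroup E]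
    [NormedSpace ℝ E] [CompleteSpace E] {g g' : ℝ → E} {u v : ℝ} (huv : u ≤ v)
    (hg : ∀ x ∈ Icc u v, HasDerivWithinAt g (g' x) (Icc u v) x)
    (hg' : ContinuousOn g' (Icc u v)) :
    ‖g v - g u‖ ≤ ∫ x in Icc u v, ‖g' x‖ := by
  have hint : IntervalIntegrable g' volume u v :=
    (hg'.mono (uIcc_of_le huv).subset).intervalIntegrable
  rw [← intervalIntegral.integral_eq_sub_of_hasDeriv_right_of_le huv
    (fun x hx => (hg x hx).continuousWithinAt)
    (fun x hx => ((hg x (Ioo_subset_Icc_self hx)).hasDerivAt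
      (Icc_mem_nhds hx.1 hx.2)).hasDerivWithinAt) hint,
    integral_Icc_eq_integral_Ioc, ← intervalIntegral.integral_of_le huv]
  exact intervalIntegral.norm_integral_le_integral_norm huv

namespace Complex

/-- `(conj z * w).im` is the oriented area of the parallelogram spanned by `z` and `w`. -/
theorem im_conj_mul_map (E : ℂ →L[ℝ] ℂ) (z w : ℂ) :
    (conj (E z) * E w).im = E.det * (conj z * w).im := by
  have hdet : E.det = (E 1).re * (E I).im - (E I).re * (E 1).im := by
    rw [ContinuousLinearMap.det, ← LinearMap.det_toMatrix basisOneI, Matrix.det_fin_two]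
    simp [LinearMap.toMatrix_apply]
  have hE : ∀ u : ℂ, E u = u.re • E 1 + u.im • E I := fun u => by
    conv_lhs => rw [show u = u.re • (1 : ℂ) + u.im • I by simp]
    rw [map_add, map_smul, map_smul]
  rw [hE z, hE w, hdet]
  simp only [mul_im, add_re, add_im, smul_re, smul_im, conj_re, conj_im, map_add]
  ring

theorem im_conj_mul_I_mul (w : ℂ) : (conj w * (I * w)).im = ‖w‖ ^ 2 := by
  simp [← normSq_eq_norm_sq, normSq_apply]

theorem norm_le_abs_det_mul_norm_symm (E : ℂ ≃L[ℝ] ℂ) :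
    ‖(E : ℂ →L[ℝ] ℂ)‖ ≤ |(E : ℂ →L[ℝ] ℂ).det| * ‖(E.symm : ℂ →L[ℝ] ℂ)‖ := by
  refine ContinuousLinearMap.opNorm_le_bound _ (by positivity) fun u => ?_
  change ‖E u‖ ≤ _
  -- compare the area spanned by `E u` and `I * E u` with the one spanned by their preimages
  set w := E u
  set v := E.symm (I * w)
  have hv : ‖v‖ ≤ ‖(E.symm : ℂ →L[ℝ] ℂ)‖ * ‖w‖ := by
    simpa using (E.symm : ℂ →L[ℝ] ℂ).le_opNorm (I * w)
  have hw : ‖w‖ ^ 2 = (E : ℂ →L[ℝ] ℂ).det * (conj u * v).im := by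
    rw [← im_conj_mul_map, ← im_conj_mul_I_mul]
    simp [v, w]
  have hw' : ‖w‖ ^ 2 ≤ |(E : ℂ →L[ℝ] ℂ).det| * ‖(E.symm : ℂ →L[ℝ] ℂ)‖ * ‖u‖ * ‖w‖ :=
    calc ‖w‖ ^ 2 ≤ |(E : ℂ →L[ℝ] ℂ).det| * (‖u‖ * ‖v‖) := by
          rw [hw, ← norm_conj u, ← norm_mul]
          calc _ ≤ |(E : ℂ →L[ℝ] ℂ).det * (conj u * v).im| := le_abs_self _
            _ ≤ _ := by rw [abs_mul]; gcongr; exact abs_im_le_norm _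
      _ ≤ |(E : ℂ →L[ℝ] ℂ).det| * (‖u‖ * (‖(E.symm : ℂ →L[ℝ] ℂ)‖ * ‖w‖)) := by gcongr
      _ = _ := by ring
  rcases (norm_nonneg w).eq_or_lt with hw0 | hw0
  · rw [← hw0]; positivity
  · nlinarith

theorem sq_norm_le_mul_abs_det (E : ℂ ≃L[ℝ] ℂ) :
    ‖(E : ℂ →L[ℝ] ℂ)‖ ^ 2 ≤
      ‖(E : ℂ →L[ℝ] ℂ)‖ * ‖(E.symm : ℂ →L[ℝ] ℂ)‖ * |(E : ℂ →L[ℝ] ℂ).det| := by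
  rw [sq, mul_assoc, mul_comm ‖(E.symm : ℂ →L[ℝ] ℂ)‖]
  exact mul_le_mul_of_nonneg_left (norm_le_abs_det_mul_norm_symm E) (norm_nonneg _)

noncomputable def diagCLM (α β : ℝ) : ℂ →L[ℝ] ℂ :=
  LinearMap.toContinuousLinearMap
    { toFun := fun z => ↑(α * z.re) + ↑(β * z.im) * I
      map_add' := fun z w => by apply Complex.ext <;> simp <;> ring
      map_smul' := fun c z => by apply Complex.ext <;> simp <;> ring }

theorem diagCLM_apply (α β : ℝ) (z : ℂ) : diagCLM α β z = ↑(α * z.re) + ↑(β * z.im) * I := rfl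

@[simp] theorem diagCLM_re (α β : ℝ) (z : ℂ) : (diagCLM α β z).re = α * z.re := by
  simp [diagCLM]

@[simp] theorem diagCLM_im (α β : ℝ) (z : ℂ) : (diagCLM α β z).im = β * z.im := by
  simp [diagCLM]

theorem norm_diagCLM (α β : ℝ) : ‖diagCLM α β‖ = max |α| |β| := by
  refine le_antisymm (ContinuousLinearMap.opNorm_le_bound _ (by positivity) fun z => ?_)
    (max_le ?_ ?_)
  · have hα : α ^ 2 ≤ max |α| |β| ^ 2 := by rw [← sq_abs]; gcongr; exact le_max_left _ _
    have hβ : β ^ 2 ≤ max |α| |β| ^ 2 := by rw [← sq_abs β]; gcongr; exact le_max_right _ _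
    refine (pow_le_pow_iff_left₀ (norm_nonneg _) (by positivity) two_ne_zero).mp ?_
    simp only [mul_pow, ← normSq_eq_norm_sq, normSq_apply, diagCLM_re, diagCLM_im]
    nlinarith [mul_self_nonneg z.re, mul_self_nonneg z.im]
  · simpa [diagCLM_apply] using (diagCLM α β).le_opNorm 1
  · simpa [diagCLM_apply] using (diagCLM α β).le_opNorm I

theorem diagCLM_apply_diagCLM_inv {α β : ℝ} (hα : α ≠ 0) (hβ : β ≠ 0) (z : ℂ) :
    diagCLM α β (diagCLM α⁻¹ β⁻¹ z) = z := by
  apply Complex.ext <;> simp [hα, hβ]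

noncomputable def diagCLE {α β : ℝ} (hα : α ≠ 0) (hβ : β ≠ 0) : ℂ ≃L[ℝ] ℂ :=
  .equivOfInverse (diagCLM α β) (diagCLM α⁻¹ β⁻¹)
    (fun z => by simpa using diagCLM_apply_diagCLM_inv (inv_ne_zero hα) (inv_ne_zero hβ) z)
    (diagCLM_apply_diagCLM_inv hα hβ)

theorem norm_diagCLE_mul_norm_symm {α β : ℝ} (hβ : 0 < β) (hβα : β ≤ α) :
    ‖(diagCLE (hβ.trans_le hβα).ne' hβ.ne' : ℂ →L[ℝ] ℂ)‖ *
      ‖((diagCLE (hβ.trans_le hβα).ne' hβ.ne').symm : ℂ →L[ℝ] ℂ)‖ = α / β := by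
  have hα : 0 < α := hβ.trans_le hβα
  change ‖diagCLM α β‖ * ‖diagCLM α⁻¹ β⁻¹‖ = α / β
  rw [norm_diagCLM, norm_diagCLM, abs_of_pos hα, abs_of_pos hβ, abs_of_pos (inv_pos.2 hα),
    abs_of_pos (inv_pos.2 hβ), max_eq_left hβα, max_eq_right (inv_anti₀ hβ hβα), div_eq_mul_inv]

theorem measurableSet_reProdIm {s t : Set ℝ} (hs : MeasurableSet s) (ht : MeasurableSet t) :
    MeasurableSet (s ×ℂ t) :=
  (measurable_re hs).inter (measurable_im ht)

theorem volume_reProdIm (s t : Set ℝ) : volume (s ×ℂ t) = volume s * volume t := by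
  rw [← Measure.prod_prod, ← Measure.volume_eq_prod]
  exact volume_preserving_equiv_real_prod.measure_preimage_equiv (s ×ˢ t)

theorem uniqueDiffOn_Icc_reProdIm_Icc {a b c d : ℝ} (hab : a < b) (hcd : c < d) :
    UniqueDiffOn ℝ (Icc a b ×ℂ Icc c d) := by
  refine uniqueDiffOn_convex ?_ ?_
  · exact ((convex_Icc a b).linear_preimage reLm).inter ((convex_Icc c d).linear_preimage imLm)
  · simp [interior_reProdIm, hab, hcd]

theorem mul_measureReal_le_setIntegral_reProdIm {s t : Set ℝ} (ht : MeasurableSet t)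
    (ht' : volume t ≠ ⊤) {F : ℂ → ℝ} (hF : IntegrableOn F (s ×ℂ t)) {c : ℝ}
    (hc : ∀ y ∈ t, c ≤ ∫ x in s, F ⟨x, y⟩) :
    c * volume.real t ≤ ∫ z in s ×ℂ t, F z := by
  have hmp := volume_preserving_equiv_real_prod.symm
  have hF' : Integrable (fun p : ℝ × ℝ => F ⟨p.1, p.2⟩)
      ((volume.restrict s).prod (volume.restrict t)) := by
    rw [Measure.prod_restrict, ← Measure.volume_eq_prod]
    exact (hmp.integrableOn_comp_preimage (MeasurableEquiv.measurableEmbedding _)).2 hF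
  calc c * volume.real t ≤ ∫ y in t, ∫ x in s, F ⟨x, y⟩ :=
        setIntegral_ge_of_const_le_real ht ht' hc hF'.integral_prod_right
    _ = ∫ z in s ×ℂ t, F z := by
        rw [← integral_prod_symm _ hF', Measure.prod_restrict, ← Measure.volume_eq_prod,
          ← hmp.setIntegral_preimage_emb (MeasurableEquiv.measurableEmbedding _)]
        rfl

theorem volume_real_Icc_reProdIm_Icc {a b c d : ℝ} (hab : a ≤ b) (hcd : c ≤ d) :
    volume.real (Icc a b ×ℂ Icc c d) = (b - a) * (d - c) := by
  rw [measureReal_def, volume_reProdIm, ENNReal.toReal_mul, ← measureReal_def,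
    ← measureReal_def, Real.volume_real_Icc_of_le hab, Real.volume_real_Icc_of_le hcd]

theorem hasDerivAt_mk_left (x y : ℝ) : HasDerivAt (fun x : ℝ => (⟨x, y⟩ : ℂ)) 1 x := by
  simp_rw [mk_eq_add_mul_I]
  simpa using ((hasDerivAt_id x).ofReal_comp).add_const (y * I : ℂ)

theorem norm_sub_le_integral_norm_fderiv_horizontal {E : Type*} [NormedAddCommGroup E]
    [NormedSpace ℝ E] [CompleteSpace E] {f : ℂ → E} {f' : ℂ → ℂ →L[ℝ] E} {s : Set ℂ}
    {u v y : ℝ} (huv : u ≤ v) (hseg : ∀ x ∈ Icc u v, (⟨x, y⟩ : ℂ) ∈ s)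
    (hf : ∀ z ∈ s, HasFDerivWithinAt f (f' z) s z) (hf' : ContinuousOn f' s) :
    ‖f ⟨v, y⟩ - f ⟨u, y⟩‖ ≤ ∫ x in Icc u v, ‖f' ⟨x, y⟩‖ := by
  have hℓ : Continuous fun x : ℝ => (⟨x, y⟩ : ℂ) :=
    continuous_iff_continuousAt.2 fun x => (hasDerivAt_mk_left x y).continuousAt
  have hf'ℓ : ContinuousOn (fun x : ℝ => f' ⟨x, y⟩) (Icc u v) := hf'.comp hℓ.continuousOn hseg
  refine (norm_sub_le_integral_norm_of_hasDerivWithinAt huv (g := fun x => f ⟨x, y⟩)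
    (g' := fun x => f' ⟨x, y⟩ 1)
    (fun x hx => ?_) (hf'ℓ.clm_apply continuousOn_const)).trans ?_
  · exact (hf _ (hseg x hx)).comp_hasDerivWithinAt x (hasDerivAt_mk_left x y).hasDerivWithinAt hseg
  · refine setIntegral_mono_on ?_ ?_ measurableSet_Icc fun x _ => ?_
    · exact ((hf'ℓ.clm_apply continuousOn_const).norm).integrableOn_compact isCompact_Icc
    · exact hf'ℓ.norm.integrableOn_compact isCompact_Icc
    · simpa using (f' ⟨x, y⟩).le_opNorm 1

theorem mul_le_setIntegral_norm_fderiv_of_re_eq {a b a' : ℝ} (ha : 0 < a) (hb : 0 < b)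
    {f : ℂ → ℂ} {f' : ℂ → ℂ →L[ℝ] ℂ}
    (hf : ∀ z ∈ Icc 0 a ×ℂ Icc 0 b, HasFDerivWithinAt f (f' z) (Icc 0 a ×ℂ Icc 0 b) z)
    (hf' : ContinuousOn f' (Icc 0 a ×ℂ Icc 0 b))
    (hleft : ∀ z ∈ Icc 0 a ×ℂ Icc 0 b, z.re = 0 → (f z).re = 0)
    (hright : ∀ z ∈ Icc 0 a ×ℂ Icc 0 b, z.re = a → (f z).re = a') :
    a' * b ≤ ∫ z in Icc 0 a ×ℂ Icc 0 b, ‖f' z‖ := by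
  have hint : IntegrableOn (fun z => ‖f' z‖) (Icc 0 a ×ℂ Icc 0 b) :=
    hf'.norm.integrableOn_compact (isCompact_Icc.reProdIm isCompact_Icc)
  have := mul_measureReal_le_setIntegral_reProdIm measurableSet_Icc measure_Icc_lt_top.ne hint
    (c := a') fun y hy => ?_
  · rwa [Real.volume_real_Icc_of_le hb.le, sub_zero] at this
  have hseg : ∀ x ∈ Icc 0 a, (⟨x, y⟩ : ℂ) ∈ Icc 0 a ×ℂ Icc 0 b := fun x hx => ⟨hx, hy⟩
  calc a' = (f ⟨a, y⟩ - f ⟨0, y⟩).re := by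
        rw [sub_re, hright _ (hseg a ⟨ha.le, le_rfl⟩) rfl,
          hleft _ (hseg 0 ⟨le_rfl, ha.le⟩) rfl, sub_zero]
    _ ≤ ‖f ⟨a, y⟩ - f ⟨0, y⟩‖ := re_le_norm _
    _ ≤ ∫ x in Icc 0 a, ‖f' ⟨x, y⟩‖ :=
        norm_sub_le_integral_norm_fderiv_horizontal ha.le hseg hf hf'

theorem div_div_div_le_of_sq_norm_fderiv_le_mul_abs_det {a b a' b' K : ℝ} (ha : 0 < a)
    (hb : 0 < b) (ha' : 0 < a') (hb' : 0 < b') {f : ℂ → ℂ} {f' : ℂ → ℂ →L[ℝ] ℂ}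
    (hf : ∀ z ∈ Icc 0 a ×ℂ Icc 0 b, HasFDerivWithinAt f (f' z) (Icc 0 a ×ℂ Icc 0 b) z)
    (hf' : ContinuousOn f' (Icc 0 a ×ℂ Icc 0 b)) (hinj : InjOn f (Icc 0 a ×ℂ Icc 0 b))
    (hmaps : MapsTo f (Icc 0 a ×ℂ Icc 0 b) (Icc 0 a' ×ℂ Icc 0 b'))
    (hleft : ∀ z ∈ Icc 0 a ×ℂ Icc 0 b, z.re = 0 → (f z).re = 0)
    (hright : ∀ z ∈ Icc 0 a ×ℂ Icc 0 b, z.re = a → (f z).re = a')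
    (hK : ∀ z ∈ Icc 0 a ×ℂ Icc 0 b, ‖f' z‖ ^ 2 ≤ K * |(f' z).det|) :
    (a' / b') / (a / b) ≤ K := by
  set R := Icc 0 a ×ℂ Icc 0 b
  have hR : IsCompact R := isCompact_Icc.reProdIm isCompact_Icc
  have hRmeas : MeasurableSet R := measurableSet_reProdIm measurableSet_Icc measurableSet_Icc
  have hN : ContinuousOn (fun z => ‖f' z‖) R := hf'.norm
  have hdet : ContinuousOn (fun z => |(f' z).det|) R :=
    (ContinuousLinearMap.continuous_det.comp_continuousOn hf').abs
  have hcs := sq_setIntegral_le_measureReal_mul_setIntegral_sq (hR.measure_lt_top (μ := volume)).ne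
    (hN.integrableOn_compact hR) ((hN.pow 2).integrableOn_compact hR)
  rw [volume_real_Icc_reProdIm_Icc ha.le hb.le, sub_zero, sub_zero] at hcs
  have hdil : ∫ z in R, ‖f' z‖ ^ 2 ≤ K * ∫ z in R, |(f' z).det| := by
    rw [← integral_const_mul]
    exact setIntegral_mono_on ((hN.pow 2).integrableOn_compact hR)
      ((hdet.integrableOn_compact hR).const_mul K) hRmeas hK
  have harea : ∫ z in R, |(f' z).det| ≤ a' * b' := by
    rw [setIntegral_abs_det_fderiv_eq_measureReal_image volume hRmeas hf hinj,
      ← sub_zero a', ← sub_zero b', ← volume_real_Icc_reProdIm_Icc ha'.le hb'.le]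
    exact measureReal_mono hmaps.image_subset
      (isCompact_Icc.reProdIm isCompact_Icc).measure_lt_top.ne
  have hchain : (a' * b) ^ 2 ≤ a * b * (K * ∫ z in R, |(f' z).det|) :=
    calc (a' * b) ^ 2 ≤ (∫ z in R, ‖f' z‖) ^ 2 := by
          gcongr
          exact mul_le_setIntegral_norm_fderiv_of_re_eq ha hb hf hf' hleft hright
      _ ≤ a * b * ∫ z in R, ‖f' z‖ ^ 2 := hcs
      _ ≤ a * b * (K * ∫ z in R, |(f' z).det|) := by gcongr
  have hK_pos : 0 < K := pos_of_mul_pos_left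
    (pos_of_mul_pos_right ((by positivity : 0 < (a' * b) ^ 2).trans_le hchain) (by positivity))
    (integral_nonneg fun _ => abs_nonneg _)
  rw [div_div_div_eq, div_le_iff₀ (by positivity)]
  refine le_of_mul_le_mul_left ?_ (mul_pos ha' hb)
  calc a' * b * (a' * b) = (a' * b) ^ 2 := (sq _).symm
    _ ≤ a * b * (K * ∫ z in R, |(f' z).det|) := hchain
    _ ≤ a * b * (K * (a' * b')) := by gcongr
    _ = a' * b * (K * (b' * a)) := by ring

end Complex

/-- Extremality of the affine map between rectangles: when `a'/b' ≥ a/b`, the affine map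
`(x,y) ↦ ((a'/a)x, (b'/b)y)` has constant dilatation quotient `K₀ = (a'/b')/(a/b)`, and every
C¹ side-respecting diffeomorphism between the rectangles has sup of dilatation quotient `≥ K₀`. -/
theorem stmt6 (a b a' b' : ℝ) (ha : 0 < a) (hb : 0 < b) (ha' : 0 < a') (hb' : 0 < b')
    (hmod : a / b ≤ a' / b') :
    (∀ z : ℂ, ∃ D : ℂ ≃L[ℝ] ℂ,
      HasFDerivAt (fun w : ℂ => (↑((a' / a) * w.re) + ↑((b' / b) * w.im) * Complex.I : ℂ))
        (D : ℂ →L[ℝ] ℂ) z ∧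
      ‖(D : ℂ →L[ℝ] ℂ)‖ * ‖(D.symm : ℂ →L[ℝ] ℂ)‖ = (a' / b') / (a / b)) ∧
    (∀ (f : ℂ → ℂ) (K : ℝ),
      ContDiffOn ℝ 1 f {z : ℂ | z.re ∈ Set.Icc 0 a ∧ z.im ∈ Set.Icc 0 b} →
      Set.BijOn f {z : ℂ | z.re ∈ Set.Icc 0 a ∧ z.im ∈ Set.Icc 0 b}
        {z : ℂ | z.re ∈ Set.Icc 0 a' ∧ z.im ∈ Set.Icc 0 b'} →
      (∀ z ∈ {z : ℂ | z.re ∈ Set.Icc 0 a ∧ z.im ∈ Set.Icc 0 b}, z.re = 0 → (f z).re = 0) →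
      (∀ z ∈ {z : ℂ | z.re ∈ Set.Icc 0 a ∧ z.im ∈ Set.Icc 0 b}, z.re = a → (f z).re = a') →
      (∀ z ∈ {z : ℂ | z.re ∈ Set.Icc 0 a ∧ z.im ∈ Set.Icc 0 b}, z.im = 0 → (f z).im = 0) →
      (∀ z ∈ {z : ℂ | z.re ∈ Set.Icc 0 a ∧ z.im ∈ Set.Icc 0 b}, z.im = b → (f z).im = b') →
      (∀ z ∈ {z : ℂ | z.re ∈ Set.Icc 0 a ∧ z.im ∈ Set.Icc 0 b}, ∃ D : ℂ ≃L[ℝ] ℂ,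
        HasFDerivWithinAt f (D : ℂ →L[ℝ] ℂ)
          {z : ℂ | z.re ∈ Set.Icc 0 a ∧ z.im ∈ Set.Icc 0 b} z ∧
        ‖(D : ℂ →L[ℝ] ℂ)‖ * ‖(D.symm : ℂ →L[ℝ] ℂ)‖ ≤ K) →
      (a' / b') / (a / b) ≤ K) := by
  have hβ : 0 < b' / b := by positivity
  have hβα : b' / b ≤ a' / a := by
    rw [div_le_div_iff₀ hb ha]
    rw [div_le_div_iff₀ hb hb'] at hmod
    linarith
  refine ⟨fun z => ⟨diagCLE (hβ.trans_le hβα).ne' hβ.ne', (diagCLM _ _).hasFDerivAt, ?_⟩, ?_⟩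
  · rw [norm_diagCLE_mul_norm_symm hβ hβα, div_div_div_comm]
  intro f K hC hbij hleft hright _ _ hD
  have hR : UniqueDiffOn ℝ (Icc 0 a ×ℂ Icc 0 b) := uniqueDiffOn_Icc_reProdIm_Icc ha hb
  refine div_div_div_le_of_sq_norm_fderiv_le_mul_abs_det ha hb ha' hb'
    (fun z hz => (hC.differentiableOn one_ne_zero z hz).hasFDerivWithinAt)
    (hC.continuousOn_fderivWithin hR le_rfl) hbij.injOn hbij.mapsTo hleft hright fun z hz => ?_
  obtain ⟨D, hfD, hDK⟩ := hD z hz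
  rw [hfD.fderivWithin (hR z hz)]
  exact (sq_norm_le_mul_abs_det D).trans (by gcongr)
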